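/- For any Hermitian operators A₁, A₂, A₃ on C² with A_i² = I and any Hermitian B₁,…,B₄ with B_j² = I, and any unit |ψ⟩ ∈ C²⊗C², the Elegant Bell expression ⟨ψ|S|ψ⟩ ≤ 4√3, where S is the Elegant Bell operator. -/
import Mathlib

open Matrix Kronecker

private lemma kron_conjT (A B : Matrix (Fin 2) (Fin 2) ℂ) :
    (A ⊗ₖ B)ᴴ = Aᴴ ⊗ₖ Bᴴ := by
  ext ⟨i, j⟩ ⟨k, l⟩
  simp [Matrix.conjTranspose_apply, Matrix.kroneckerMap_apply, mul_comm]

private lemma key (M N : Matrix (Fin 2 × Fin 2) (Fin 2 × Fin 2) ℂ) (hM : Mᴴ = M)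
    (ψ : Fin 2 × Fin 2 → ℂ) :
    star (M *ᵥ ψ) ⬝ᵥ (N *ᵥ ψ) = star ψ ⬝ᵥ ((M * N) *ᵥ ψ) := by
  rw [Matrix.star_mulVec, hM, ← Matrix.dotProduct_mulVec, Matrix.mulVec_mulVec]

private lemma dot_self_re_nonneg (w : Fin 2 × Fin 2 → ℂ) : 0 ≤ (star w ⬝ᵥ w).re := by
  simp only [dotProduct, Pi.star_apply, Complex.re_sum]
  apply Finset.sum_nonneg
  intro i _
  simp only [Complex.star_def, ← Complex.normSq_eq_conj_mul_self]
  exact Complex.normSq_nonneg _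

private lemma dot_star_comm (u v : Fin 2 × Fin 2 → ℂ) :
    star v ⬝ᵥ u = star (star u ⬝ᵥ v) := by
  simp [dotProduct, Pi.star_apply, mul_comm]

private lemma core (C B : Matrix (Fin 2) (Fin 2) ℂ) (hC : Cᴴ = C) (hB : Bᴴ = B)
    (hB2 : B * B = 1) (ψ : Fin 2 × Fin 2 → ℂ) (hψ : star ψ ⬝ᵥ ψ = 1) :
    2 * Real.sqrt 3 * (star ψ ⬝ᵥ ((C ⊗ₖ B) *ᵥ ψ)).re
      ≤ (star ψ ⬝ᵥ (((C * C) ⊗ₖ (1 : Matrix (Fin 2) (Fin 2) ℂ)) *ᵥ ψ)).re + 3 := by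
  set u := (C ⊗ₖ (1 : Matrix (Fin 2) (Fin 2) ℂ)) *ᵥ ψ with hu
  set v := ((1 : Matrix (Fin 2) (Fin 2) ℂ) ⊗ₖ B) *ᵥ ψ with hv
  have hCk : (C ⊗ₖ (1 : Matrix (Fin 2) (Fin 2) ℂ))ᴴ = C ⊗ₖ 1 := by
    rw [kron_conjT, hC, Matrix.conjTranspose_one]
  have hBk : ((1 : Matrix (Fin 2) (Fin 2) ℂ) ⊗ₖ B)ᴴ = 1 ⊗ₖ B := by
    rw [kron_conjT, hB, Matrix.conjTranspose_one]
  have hR : star u ⬝ᵥ v = star ψ ⬝ᵥ ((C ⊗ₖ B) *ᵥ ψ) := by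
    rw [hu, hv, key _ _ hCk, ← Matrix.mul_kronecker_mul, one_mul, mul_one]
  have hP : star u ⬝ᵥ u = star ψ ⬝ᵥ (((C * C) ⊗ₖ 1) *ᵥ ψ) := by
    rw [hu, key _ _ hCk, ← Matrix.mul_kronecker_mul, mul_one]
  have hQ : star v ⬝ᵥ v = 1 := by
    rw [hv, key _ _ hBk, ← Matrix.mul_kronecker_mul, one_mul, hB2,
      Matrix.one_kronecker_one, Matrix.one_mulVec]
    exact hψ
  set s := Real.sqrt 3 with hs
  have hs0 : 0 < s := Real.sqrt_pos.mpr (by norm_num)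
  have hss : s * s = 3 := Real.mul_self_sqrt (by norm_num)
  have hw := dot_self_re_nonneg (u - (s : ℂ) • v)
  have hexp : star (u - (s : ℂ) • v) ⬝ᵥ (u - (s : ℂ) • v)
      = star u ⬝ᵥ u - (s : ℂ) * (star v ⬝ᵥ u) - (s : ℂ) * (star u ⬝ᵥ v)
        + ((s : ℂ) * (s : ℂ)) * (star v ⬝ᵥ v) := by
    simp only [star_sub, star_smul, sub_dotProduct, dotProduct_sub,
      smul_dotProduct, dotProduct_smul, Complex.star_def,
      Complex.conj_ofReal, smul_eq_mul]
    ring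
  rw [hexp] at hw
  have hcomm : (star v ⬝ᵥ u).re = (star u ⬝ᵥ v).re := by
    rw [dot_star_comm]; exact (Complex.conj_re _)
  have hre : (star u ⬝ᵥ u - (s : ℂ) * (star v ⬝ᵥ u) - (s : ℂ) * (star u ⬝ᵥ v)
        + ((s : ℂ) * (s : ℂ)) * (star v ⬝ᵥ v)).re
      = (star u ⬝ᵥ u).re - s * (star v ⬝ᵥ u).re - s * (star u ⬝ᵥ v).re
        + (s * s) * (star v ⬝ᵥ v).re := by
    simp [Complex.add_re, Complex.sub_re, Complex.ofReal_mul, mul_assoc]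
  rw [hre] at hw
  rw [← hR, ← hP]
  have hQre : (star v ⬝ᵥ v).re = 1 := by rw [hQ]; simp
  rw [hcomm, hQre, hss] at hw
  linarith

theorem stmt9 (A₁ A₂ A₃ B₁ B₂ B₃ B₄ : Matrix (Fin 2) (Fin 2) ℂ)
    (hA1 : A₁.IsHermitian) (hA2 : A₂.IsHermitian) (hA3 : A₃.IsHermitian)
    (hB1 : B₁.IsHermitian) (hB2 : B₂.IsHermitian)
    (hB3 : B₃.IsHermitian) (hB4 : B₄.IsHermitian)
    (hA12 : A₁ * A₁ = 1) (hA22 : A₂ * A₂ = 1) (hA32 : A₃ * A₃ = 1)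
    (hB12 : B₁ * B₁ = 1) (hB22 : B₂ * B₂ = 1) (hB32 : B₃ * B₃ = 1) (hB42 : B₄ * B₄ = 1)
    (ψ : Fin 2 × Fin 2 → ℂ) (hψ : star ψ ⬝ᵥ ψ = 1)
    (S : Matrix (Fin 2 × Fin 2) (Fin 2 × Fin 2) ℂ)
    (hS : S = A₁ ⊗ₖ B₁ + A₂ ⊗ₖ B₁ + A₃ ⊗ₖ B₁ + A₁ ⊗ₖ B₂ - A₂ ⊗ₖ B₂ - A₃ ⊗ₖ B₂
        - A₁ ⊗ₖ B₃ + A₂ ⊗ₖ B₃ - A₃ ⊗ₖ B₃ - A₁ ⊗ₖ B₄ - A₂ ⊗ₖ B₄ + A₃ ⊗ₖ B₄) :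
    (star ψ ⬝ᵥ (S *ᵥ ψ)).re ≤ 4 * Real.sqrt 3 := by
  set C₁ := A₁ + A₂ + A₃ with hC1d
  set C₂ := A₁ - A₂ - A₃ with hC2d
  set C₃ := -A₁ + A₂ - A₃ with hC3d
  set C₄ := -A₁ - A₂ + A₃ with hC4d
  have hS' : S = C₁ ⊗ₖ B₁ + C₂ ⊗ₖ B₂ + C₃ ⊗ₖ B₃ + C₄ ⊗ₖ B₄ := by
    rw [hS, hC1d, hC2d, hC3d, hC4d]
    ext ⟨i, j⟩ ⟨k, l⟩
    simp [Matrix.kroneckerMap_apply, Matrix.add_apply, Matrix.sub_apply, Matrix.neg_apply]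
    ring
  have hC1h : C₁ᴴ = C₁ := by
    simp [hC1d, Matrix.conjTranspose_add, hA1.eq, hA2.eq, hA3.eq]
  have hC2h : C₂ᴴ = C₂ := by
    simp [hC2d, Matrix.conjTranspose_sub, hA1.eq, hA2.eq, hA3.eq]
  have hC3h : C₃ᴴ = C₃ := by
    simp [hC3d, Matrix.conjTranspose_add, Matrix.conjTranspose_sub,
      Matrix.conjTranspose_neg, hA1.eq, hA2.eq, hA3.eq]
  have hC4h : C₄ᴴ = C₄ := by
    simp [hC4d, Matrix.conjTranspose_add, Matrix.conjTranspose_sub,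
      Matrix.conjTranspose_neg, hA1.eq, hA2.eq, hA3.eq]
  have h12 : C₁ * C₁ + C₂ * C₂ + C₃ * C₃ + C₄ * C₄ = (12 : ℂ) • 1 := by
    have e : C₁ * C₁ + C₂ * C₂ + C₃ * C₃ + C₄ * C₄
        = 4 * (A₁ * A₁) + 4 * (A₂ * A₂) + 4 * (A₃ * A₃) := by
      rw [hC1d, hC2d, hC3d, hC4d]; noncomm_ring
    rw [e, hA12, hA22, hA32, ← Matrix.diagonal_ofNat (n := Fin 2) (α := ℂ) 4]
    ext i j
    simp [Matrix.diagonal_apply, Matrix.smul_apply, Matrix.one_apply]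
    split <;> norm_num
  set s := Real.sqrt 3 with hs
  have hs0 : 0 < s := Real.sqrt_pos.mpr (by norm_num)
  have hss : s * s = 3 := Real.mul_self_sqrt (by norm_num)
  have hb1 := core C₁ B₁ hC1h hB1.eq hB12 ψ hψ
  have hb2 := core C₂ B₂ hC2h hB2.eq hB22 ψ hψ
  have hb3 := core C₃ B₃ hC3h hB3.eq hB32 ψ hψ
  have hb4 := core C₄ B₄ hC4h hB4.eq hB42 ψ hψ
  have hX : star ψ ⬝ᵥ (S *ᵥ ψ)
      = star ψ ⬝ᵥ ((C₁ ⊗ₖ B₁) *ᵥ ψ) + star ψ ⬝ᵥ ((C₂ ⊗ₖ B₂) *ᵥ ψ)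
        + star ψ ⬝ᵥ ((C₃ ⊗ₖ B₃) *ᵥ ψ) + star ψ ⬝ᵥ ((C₄ ⊗ₖ B₄) *ᵥ ψ) := by
    rw [hS']
    simp [Matrix.add_mulVec, dotProduct_add]
  have hPsum : star ψ ⬝ᵥ (((C₁ * C₁) ⊗ₖ (1 : Matrix (Fin 2) (Fin 2) ℂ)) *ᵥ ψ)
      + star ψ ⬝ᵥ (((C₂ * C₂) ⊗ₖ (1 : Matrix (Fin 2) (Fin 2) ℂ)) *ᵥ ψ)
      + star ψ ⬝ᵥ (((C₃ * C₃) ⊗ₖ (1 : Matrix (Fin 2) (Fin 2) ℂ)) *ᵥ ψ)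
      + star ψ ⬝ᵥ (((C₄ * C₄) ⊗ₖ (1 : Matrix (Fin 2) (Fin 2) ℂ)) *ᵥ ψ) = 12 := by
    have hc : (C₁ * C₁) ⊗ₖ (1 : Matrix (Fin 2) (Fin 2) ℂ) + (C₂ * C₂) ⊗ₖ 1
        + (C₃ * C₃) ⊗ₖ 1 + (C₄ * C₄) ⊗ₖ 1
        = (C₁ * C₁ + C₂ * C₂ + C₃ * C₃ + C₄ * C₄) ⊗ₖ 1 := by
      simp [Matrix.add_kronecker]
    calc _ = star ψ ⬝ᵥ (((C₁ * C₁ + C₂ * C₂ + C₃ * C₃ + C₄ * C₄)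
              ⊗ₖ (1 : Matrix (Fin 2) (Fin 2) ℂ)) *ᵥ ψ) := by
            rw [← hc]
            simp [Matrix.add_mulVec, dotProduct_add]
      _ = 12 := by
            rw [h12, Matrix.smul_kronecker, Matrix.one_kronecker_one,
              Matrix.smul_mulVec, Matrix.one_mulVec, dotProduct_smul, hψ]
            simp
  have hXre : (star ψ ⬝ᵥ (S *ᵥ ψ)).re
      = (star ψ ⬝ᵥ ((C₁ ⊗ₖ B₁) *ᵥ ψ)).re + (star ψ ⬝ᵥ ((C₂ ⊗ₖ B₂) *ᵥ ψ)).re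
        + (star ψ ⬝ᵥ ((C₃ ⊗ₖ B₃) *ᵥ ψ)).re + (star ψ ⬝ᵥ ((C₄ ⊗ₖ B₄) *ᵥ ψ)).re := by
    rw [hX]; simp [Complex.add_re]
  have hPre : (star ψ ⬝ᵥ (((C₁ * C₁) ⊗ₖ (1 : Matrix (Fin 2) (Fin 2) ℂ)) *ᵥ ψ)).re
      + (star ψ ⬝ᵥ (((C₂ * C₂) ⊗ₖ (1 : Matrix (Fin 2) (Fin 2) ℂ)) *ᵥ ψ)).re
      + (star ψ ⬝ᵥ (((C₃ * C₃) ⊗ₖ (1 : Matrix (Fin 2) (Fin 2) ℂ)) *ᵥ ψ)).re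
      + (star ψ ⬝ᵥ (((C₄ * C₄) ⊗ₖ (1 : Matrix (Fin 2) (Fin 2) ℂ)) *ᵥ ψ)).re = 12 := by
    have := congrArg Complex.re hPsum
    simpa [Complex.add_re] using this
  nlinarith [hb1, hb2, hb3, hb4, hs0, hss, hXre, hPre]
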